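/- arXiv:1807.11930 — 2 statements merged into one kernel-verified Lean document; each statement's English description precedes it below -/
import Mathlib

section
/- Let T : H₁ → H₂ be a bounded Fredholm operator between Hilbert spaces. If S is another bounded operator sufficiently close to T in operator norm, then S is Fredholm with the same index as T. -/
open Module

/-- A bounded operator is Fredholm if its kernel is finite-dimensional,
its range is closed, and its cokernel is finite-dimensional. -/
def IsFredholm {E F : Type*} [NormedAddCommGroup E] [NormedSpace ℝ E]
    [NormedAddCommGroup F] [NormedSpace ℝ F] (T : E →L[ℝ] F) : Prop :=
  FiniteDimensional ℝ (LinearMap.ker (T : E →ₗ[ℝ] F)) ∧ IsClosed (LinearMap.range (T : E →ₗ[ℝ] F) : Set F) ∧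
    FiniteDimensional ℝ (F ⧸ LinearMap.range (T : E →ₗ[ℝ] F))

/-- The Fredholm index: `dim ker − dim coker`. -/
noncomputable def fredholmIndex {E F : Type*} [NormedAddCommGroup E] [NormedSpace ℝ E]
    [NormedAddCommGroup F] [NormedSpace ℝ F] (T : E →L[ℝ] F) : ℤ :=
  (finrank ℝ (LinearMap.ker (T : E →ₗ[ℝ] F)) : ℤ) - (finrank ℝ (F ⧸ LinearMap.range (T : E →ₗ[ℝ] F)) : ℤ)

/-!
Embed `T` in a Grushin problem: with `K = ker T`, `V = (range T)ᗮ`, `P` the orthogonal projection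
onto `K` and `J` the inclusion of `V`, the bordered operator `(x, v) ↦ (T x + J v, P x)` from
`H₁ × V` to `H₂ × K` is invertible. Invertibility is an open condition, so the bordered operator
built from the same `J`, `P` and any `S` close to `T` is invertible too. If `μ : K → V` is the
lower-right block of its inverse, the kernel and cokernel of `S` are isomorphic to those of `μ`,
and the range of `S` is the preimage of `range μ` under a continuous map. Hence `S` is Fredholm
with index `index μ = dim K - dim V`, a number independent of `S`.
-/

open LinearMap Submodule

namespace Grushin

variable {R E F K V : Type*} [Ring R] [AddCommGroup E] [Module R E] [AddCommGroup F] [Module R F]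
  [AddCommGroup K] [Module R K] [AddCommGroup V] [Module R V]

/-- The block `E₋₊` of `e⁻¹` in the Grushin-problem terminology of Sjöstrand–Zworski. -/
def effective (e : (E × V) ≃ₗ[R] (F × K)) : K →ₗ[R] V :=
  snd R E V ∘ₗ e.symm.toLinearMap ∘ₗ inr R F K

variable {S : E →ₗ[R] F} {J : V →ₗ[R] F} {P : E →ₗ[R] K} {e : (E × V) ≃ₗ[R] (F × K)}

lemma symm_apply (he : ∀ x v, e (x, v) = (S x + J v, P x)) (x : E) (v : V) :
    e.symm (S x + J v, P x) = (x, v) := by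
  rw [← he, e.symm_apply_apply]

lemma apply_symm (he : ∀ x v, e (x, v) = (S x + J v, P x)) (y : F) (w : K) :
    S (e.symm (y, w)).1 + J (e.symm (y, w)).2 = y ∧ P (e.symm (y, w)).1 = w := by
  rw [← Prod.mk_inj, ← he, e.apply_symm_apply]

lemma symm_zero_apply_of_mem_ker (he : ∀ x v, e (x, v) = (S x + J v, P x)) {x : E}
    (hx : x ∈ ker S) : e.symm (0, P x) = (x, 0) := by
  simpa [mem_ker.mp hx] using symm_apply he x 0

lemma comap_range_eq_range_effective (he : ∀ x v, e (x, v) = (S x + J v, P x)) :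
    (range S).comap J = range (effective e) := by
  ext v
  constructor
  · rintro ⟨x, hx⟩
    refine ⟨-P x, ?_⟩
    simpa [effective, hx] using congrArg Prod.snd (symm_apply he (-x) v)
  · rintro ⟨w, rfl⟩
    refine ⟨-(e.symm (0, w)).1, ?_⟩
    simpa [effective, neg_eq_iff_add_eq_zero, add_comm] using (apply_symm he 0 w).1

lemma surjective_mkQ_comp (he : ∀ x v, e (x, v) = (S x + J v, P x)) :
    Function.Surjective ((range S).mkQ ∘ₗ J) := by
  rintro ⟨y⟩
  refine ⟨(e.symm (y, 0)).2, (Submodule.Quotient.eq _).mpr ?_⟩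
  refine ⟨-(e.symm (y, 0)).1, ?_⟩
  obtain ⟨hy, -⟩ := apply_symm he y 0
  generalize e.symm (y, 0) = p at hy ⊢
  rw [map_neg, ← hy]
  abel

noncomputable def cokerEquiv (he : ∀ x v, e (x, v) = (S x + J v, P x)) :
    (F ⧸ range S) ≃ₗ[R] V ⧸ range (effective e) :=
  (quotKerEquivOfSurjective _ (surjective_mkQ_comp he)).symm ≪≫ₗ
    quotEquivOfEq _ _ (by rw [ker_comp, ker_mkQ, comap_range_eq_range_effective he])

def kerEquiv (he : ∀ x v, e (x, v) = (S x + J v, P x)) : ker S ≃ₗ[R] ker (effective e) where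
  __ := P.restrict fun x hx => by
    simp [effective, symm_zero_apply_of_mem_ker he hx]
  invFun w := ⟨(e.symm (0, w)).1, by
    have hw : (e.symm (0, w)).2 = 0 := mem_ker.mp w.2
    simpa [hw] using (apply_symm he 0 w).1⟩
  left_inv x := Subtype.ext (congrArg Prod.fst (symm_zero_apply_of_mem_ker he x.2))
  right_inv w := Subtype.ext (apply_symm he 0 w).2

lemma index_eq_index_effective (he : ∀ x v, e (x, v) = (S x + J v, P x)) :
    S.index = (effective e).index := by
  rw [index_eq_finrank_sub, index_eq_finrank_sub, (kerEquiv he).finrank_eq,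
    (cokerEquiv he).finrank_eq]

lemma range_eq_comap_range_effective (he : ∀ x v, e (x, v) = (S x + J v, P x)) :
    range S = (range (effective e)).comap (snd R E V ∘ₗ e.symm.toLinearMap ∘ₗ inl R F K) := by
  ext y
  obtain ⟨hy, -⟩ := apply_symm he y 0
  rw [mem_comap, ← comap_range_eq_range_effective he, mem_comap]
  change y ∈ range S ↔ J (e.symm (y, 0)).2 ∈ range S
  generalize e.symm (y, 0) = p at hy ⊢
  rw [← hy]
  exact (range S).add_mem_iff_right (mem_range_self S p.1)

lemma bijective_of_isCompl (S : E →ₗ[R] F) {V : Submodule R F} (hV : IsCompl (range S) V)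
    {P : E →ₗ[R] ker S} (hP : ∀ x : ker S, P x = x) :
    Function.Bijective ((S.coprod V.subtype).prod (P ∘ₗ fst R E V)) := by
  constructor
  · rw [injective_iff_map_eq_zero]
    rintro ⟨x, v⟩ h
    obtain ⟨hSxv, hPx⟩ : S x + v = 0 ∧ P x = 0 := Prod.mk_eq_zero.mp h
    have hSx : S x = 0 := disjoint_def.mp hV.disjoint _ (mem_range_self S x)
      (by rw [eq_neg_of_add_eq_zero_left hSxv]; exact neg_mem v.2)
    have hx : x = 0 := by simpa [hPx] using (congrArg Subtype.val (hP ⟨x, hSx⟩)).symm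
    simp_all
  · rintro ⟨y, w⟩
    obtain ⟨_, ⟨z, rfl⟩, v, hv, rfl⟩ := mem_sup.mp (hV.sup_eq_top ▸ mem_top : y ∈ range S ⊔ V)
    refine ⟨(z - P z + w, ⟨v, hv⟩), ?_⟩
    simp [hP]

end Grushin

section Analysis

open Topology

variable {E F K V : Type*} [NormedAddCommGroup E] [NormedSpace ℝ E] [NormedAddCommGroup F]
  [NormedSpace ℝ F] [NormedAddCommGroup K] [NormedSpace ℝ K] [NormedAddCommGroup V]
  [NormedSpace ℝ V]

def grushinOperator (S : E →L[ℝ] F) (J : V →L[ℝ] F) (P : E →L[ℝ] K) : E × V →L[ℝ] F × K :=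
  (S.coprod J).prod (P.comp (ContinuousLinearMap.fst ℝ E V))

lemma continuous_grushinOperator (J : V →L[ℝ] F) (P : E →L[ℝ] K) :
    Continuous fun S : E →L[ℝ] F => grushinOperator S J P := by
  have : (fun S : E →L[ℝ] F => grushinOperator S J P) = fun S => grushinOperator 0 J P +
      (ContinuousLinearMap.inl ℝ F K).comp (S.comp (ContinuousLinearMap.fst ℝ E V)) := by
    funext S
    ext <;> simp [grushinOperator]
  rw [this]
  fun_prop

variable {S : E →L[ℝ] F} {J : V →L[ℝ] F} {P : E →L[ℝ] K}

lemma toLinearEquiv_apply_of_eq_grushinOperator {e : (E × V) ≃L[ℝ] (F × K)}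
    (he : (e : E × V →L[ℝ] F × K) = grushinOperator S J P) (x : E) (v : V) :
    e.toLinearEquiv (x, v) = (S x + J v, P x) :=
  DFunLike.congr_fun he (x, v)

variable [FiniteDimensional ℝ K] [FiniteDimensional ℝ V]

lemma isFredholm_of_grushinOperator (e : (E × V) ≃L[ℝ] (F × K))
    (he : (e : E × V →L[ℝ] F × K) = grushinOperator S J P) : IsFredholm S := by
  have he' := toLinearEquiv_apply_of_eq_grushinOperator he
  refine ⟨(Grushin.kerEquiv he').symm.finiteDimensional, ?_,
    (Grushin.cokerEquiv he').symm.finiteDimensional⟩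
  rw [Grushin.range_eq_comap_range_effective he']
  exact (closed_of_finiteDimensional (range (Grushin.effective e.toLinearEquiv))).preimage
    ((ContinuousLinearMap.snd ℝ E V).comp
      ((e.symm : F × K →L[ℝ] E × V).comp (ContinuousLinearMap.inl ℝ F K))).continuous

lemma fredholmIndex_eq_of_grushinOperator (e : (E × V) ≃L[ℝ] (F × K))
    (he : (e : E × V →L[ℝ] F × K) = grushinOperator S J P) :
    fredholmIndex S = finrank ℝ K - finrank ℝ V :=
  (Grushin.index_eq_index_effective (toLinearEquiv_apply_of_eq_grushinOperator he)).trans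
    index_eq_of_finiteDimensional

lemma eventually_isFredholm_and_fredholmIndex_eq [CompleteSpace E] {T : E →L[ℝ] F}
    (e : (E × V) ≃L[ℝ] (F × K)) (he : (e : E × V →L[ℝ] F × K) = grushinOperator T J P) :
    ∀ᶠ S in 𝓝 T, IsFredholm S ∧ fredholmIndex S = fredholmIndex T := by
  have : CompleteSpace V := FiniteDimensional.complete ℝ V
  have hinvertible : ∀ᶠ S in 𝓝 T,
      grushinOperator S J P ∈ Set.range ((↑) : ((E × V) ≃L[ℝ] (F × K)) → E × V →L[ℝ] F × K) :=
    (continuous_grushinOperator J P).continuousAt.preimage_mem_nhds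
      (ContinuousLinearEquiv.isOpen.mem_nhds ⟨e, he⟩)
  filter_upwards [hinvertible] with S ⟨eS, heS⟩
  exact ⟨isFredholm_of_grushinOperator eS heS, by
    rw [fredholmIndex_eq_of_grushinOperator eS heS, fredholmIndex_eq_of_grushinOperator e he]⟩

end Analysis

/-- Fredholm operators between Hilbert spaces are stable under small perturbations
in operator norm, and the index is locally constant. -/
theorem stmt4 {H₁ H₂ : Type*} [NormedAddCommGroup H₁] [InnerProductSpace ℝ H₁]
    [CompleteSpace H₁] [NormedAddCommGroup H₂] [InnerProductSpace ℝ H₂] [CompleteSpace H₂]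
    (T : H₁ →L[ℝ] H₂) (hT : IsFredholm T) :
    ∃ ε > 0, ∀ S : H₁ →L[ℝ] H₂, ‖S - T‖ < ε →
      IsFredholm S ∧ fredholmIndex S = fredholmIndex T := by
  obtain ⟨hker, hclosed, hcoker⟩ := hT
  set R := range (T : H₁ →ₗ[ℝ] H₂)
  have : CompleteSpace R := hclosed.completeSpace_coe
  have hR : IsCompl R Rᗮ := isCompl_orthogonal R
  have : FiniteDimensional ℝ Rᗮ := (quotientEquivOfIsCompl R Rᗮ hR).finiteDimensional
  have : CompleteSpace (ker (T : H₁ →ₗ[ℝ] H₂)) := FiniteDimensional.complete ℝ _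
  obtain ⟨hinj, hsurj⟩ := Grushin.bijective_of_isCompl (T : H₁ →ₗ[ℝ] H₂) hR
    (orthogonalProjectionOnto_mem_subspace_eq_self (K := ker (T : H₁ →ₗ[ℝ] H₂)))
  let e := ContinuousLinearEquiv.ofBijective
    (grushinOperator T Rᗮ.subtypeL (ker (T : H₁ →ₗ[ℝ] H₂)).orthogonalProjectionOnto)
    (ker_eq_bot.mpr hinj) (range_eq_top.mpr hsurj)
  simpa only [dist_eq_norm] using
    Metric.eventually_nhds_iff.mp (eventually_isFredholm_and_fredholmIndex_eq e rfl)
end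

section
/- Let V, W be Banach spaces and let d : V → W, d* : V' → W (with V' Banach) be two bounded operators such that S := im(d) + im(d*) is closed in W. If there exist bounded operators D : W → W₁ and D' : W → W₂ with D∘d* = 0, D'∘d = 0, and the restrictions D|_{im d}, D'|_{im d*} injective, then the sum im(d) + im(d*) is a direct sum and both summands are closed in W. -/
/-- Abstract closedness lemma: if `S = im d + im d'` is closed in a Banach space `W`,
and there are bounded operators `D`, `D'` on `W` with `D ∘ d' = 0`, `D' ∘ d = 0`, `D`
injective on `im d` and `D'` injective on `im d'`, then the sum is a direct sum and
both summands are closed. -/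
theorem stmt8 {V V' W W₁ W₂ : Type*}
    [NormedAddCommGroup V] [NormedSpace ℝ V] [CompleteSpace V]
    [NormedAddCommGroup V'] [NormedSpace ℝ V'] [CompleteSpace V']
    [NormedAddCommGroup W] [NormedSpace ℝ W] [CompleteSpace W]
    [NormedAddCommGroup W₁] [NormedSpace ℝ W₁] [CompleteSpace W₁]
    [NormedAddCommGroup W₂] [NormedSpace ℝ W₂] [CompleteSpace W₂]
    (d : V →L[ℝ] W) (d' : V' →L[ℝ] W)
    (hS : IsClosed ((LinearMap.range (d : V →ₗ[ℝ] W) ⊔ LinearMap.range (d' : V' →ₗ[ℝ] W) : Submodule ℝ W) : Set W))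
    (D : W →L[ℝ] W₁) (D' : W →L[ℝ] W₂)
    (hDd' : ∀ v' : V', D (d' v') = 0) (hD'd : ∀ v : V, D' (d v) = 0)
    (hDinj : Set.InjOn D ((LinearMap.range (d : V →ₗ[ℝ] W) : Submodule ℝ W) : Set W))
    (hD'inj : Set.InjOn D' ((LinearMap.range (d' : V' →ₗ[ℝ] W) : Submodule ℝ W) : Set W)) :
    Disjoint (LinearMap.range (d : V →ₗ[ℝ] W)) (LinearMap.range (d' : V' →ₗ[ℝ] W)) ∧
      IsClosed ((LinearMap.range (d : V →ₗ[ℝ] W) : Submodule ℝ W) : Set W) ∧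
      IsClosed ((LinearMap.range (d' : V' →ₗ[ℝ] W) : Submodule ℝ W) : Set W) := by
  have h0d : (0 : W) ∈ LinearMap.range (d : V →ₗ[ℝ] W) := ⟨0, map_zero d⟩
  have h0d' : (0 : W) ∈ LinearMap.range (d' : V' →ₗ[ℝ] W) := ⟨0, map_zero d'⟩
  refine ⟨?_, ?_, ?_⟩
  · rw [Submodule.disjoint_def]
    rintro x ⟨v, rfl⟩ ⟨v', hv'⟩
    apply hDinj ⟨v, rfl⟩ h0d
    rw [← hv', ContinuousLinearMap.coe_coe, hDd', map_zero]
  · have : ((LinearMap.range (d : V →ₗ[ℝ] W) : Submodule ℝ W) : Set W) =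
        ((LinearMap.range (d : V →ₗ[ℝ] W) ⊔ LinearMap.range (d' : V' →ₗ[ℝ] W) : Submodule ℝ W) : Set W) ∩ D' ⁻¹' {0} := by
      ext x
      constructor
      · rintro ⟨v, rfl⟩
        exact ⟨Submodule.mem_sup_left ⟨v, rfl⟩, hD'd v⟩
      · rintro ⟨hx, hx0⟩
        obtain ⟨a, ha, b, hb, rfl⟩ := Submodule.mem_sup.mp hx
        obtain ⟨v, rfl⟩ := ha
        have hb0 : b = 0 := by
          apply hD'inj hb h0d'
          have : D' (d v + b) = 0 := hx0
          rw [map_add, hD'd, zero_add] at this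
          rw [this, map_zero]
        rw [hb0, add_zero]
        exact ⟨v, rfl⟩
    rw [this]
    exact hS.inter (isClosed_singleton.preimage D'.continuous)
  · have : ((LinearMap.range (d' : V' →ₗ[ℝ] W) : Submodule ℝ W) : Set W) =
        ((LinearMap.range (d : V →ₗ[ℝ] W) ⊔ LinearMap.range (d' : V' →ₗ[ℝ] W) : Submodule ℝ W) : Set W) ∩ D ⁻¹' {0} := by
      ext x
      constructor
      · rintro ⟨v', rfl⟩
        exact ⟨Submodule.mem_sup_right ⟨v', rfl⟩, hDd' v'⟩
      · rintro ⟨hx, hx0⟩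
        obtain ⟨a, ha, b, hb, rfl⟩ := Submodule.mem_sup.mp hx
        obtain ⟨v', rfl⟩ := hb
        have ha0 : a = 0 := by
          apply hDinj ha h0d
          have : D (a + d' v') = 0 := hx0
          rw [map_add, hDd', add_zero] at this
          rw [this, map_zero]
        rw [ha0, zero_add]
        exact ⟨v', rfl⟩
    rw [this]
    exact hS.inter (isClosed_singleton.preimage D.continuous)
end
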